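/- Let f : G → Q be a surjective group homomorphism and n ≥ 1 a natural number such that every element of Q is a product of at most n commutators of elements of Q. Let Xₙ ⊆ G be the set of products of at most n commutators ⁅u,v⁆ in which each of u and v is itself a product of at most n commutators of elements of G. Then every element a of the second derived subgroup ⁅⁅G,G⁆,⁅G,G⁆⁆ of G can be written as a = c·b with b ∈ Xₙ and c ∈ ker f ∩ ⁅⁅G,G⁆,⁅G,G⁆⁆. -/

import Mathlib

/-!
Write `f a` as a product of at most `n` commutators in `Q`. Each of the at most `2n` entries is itself a
product of at most `n` commutators of `Q`, and such a product lifts along the surjection `f` to a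
product of at most `n` commutators of `G`. Substituting the lifts gives `b ∈ Xₙ` with `f b = f a`,
and `Xₙ ⊆ ⁅⁅G,G⁆,⁅G,G⁆⁆`, so `c = a * b⁻¹` lies in `ker f ∩ ⁅⁅G,G⁆,⁅G,G⁆⁆`.
-/

open scoped commutatorElement

/-- The set of elements of `G` that are products of at most `n` commutators. -/
def commutatorProds (G : Type*) [Group G] (n : ℕ) : Set G :=
  {x | ∃ l : List (G × G), l.length ≤ n ∧ x = (l.map fun p => ⁅p.1, p.2⁆).prod}

/-- The set `Xₙ` of products of at most `n` commutators `⁅u,v⁆` in which each of `u`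
and `v` is itself a product of at most `n` commutators of `G`. -/
def iteratedCommutatorProds (G : Type*) [Group G] (n : ℕ) : Set G :=
  {x | ∃ l : List (G × G), l.length ≤ n ∧
    (∀ p ∈ l, p.1 ∈ commutatorProds G n ∧ p.2 ∈ commutatorProds G n) ∧
    x = (l.map fun p => ⁅p.1, p.2⁆).prod}

lemma commutatorProds_subset_commutator (G : Type*) [Group G] (n : ℕ) :
    commutatorProds G n ⊆ (commutator G : Set G) := by
  rintro x ⟨l, -, rfl⟩
  refine SetLike.mem_coe.mpr <| list_prod_mem fun y hy => ?_
  obtain ⟨p, -, rfl⟩ := List.mem_map.mp hy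
  exact Subgroup.commutator_mem_commutator (Subgroup.mem_top _) (Subgroup.mem_top _)

lemma iteratedCommutatorProds_subset_commutator_commutator (G : Type*) [Group G] (n : ℕ) :
    iteratedCommutatorProds G n ⊆ ((⁅commutator G, commutator G⁆ : Subgroup G) : Set G) := by
  rintro x ⟨l, -, hl, rfl⟩
  refine SetLike.mem_coe.mpr <| list_prod_mem fun y hy => ?_
  obtain ⟨p, hp, rfl⟩ := List.mem_map.mp hy
  exact Subgroup.commutator_mem_commutator
    (commutatorProds_subset_commutator G n (hl p hp).1)
    (commutatorProds_subset_commutator G n (hl p hp).2)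

lemma MonoidHom.map_list_prod_commutatorElement {G Q : Type*} [Group G] [Group Q]
    (f : G →* Q) (l : List (G × G)) :
    f (l.map fun p => ⁅p.1, p.2⁆).prod =
      ((l.map (Prod.map f f)).map fun p => ⁅p.1, p.2⁆).prod := by
  simp [map_list_prod, Function.comp_def, map_commutatorElement]

lemma commutatorProds_subset_image {G Q : Type*} [Group G] [Group Q] (f : G →* Q)
    (hf : Function.Surjective f) (n : ℕ) :
    commutatorProds Q n ⊆ f '' commutatorProds G n := by
  rintro _ ⟨l, hl, rfl⟩
  set g := Function.surjInv hf
  refine ⟨((l.map (Prod.map g g)).map fun p => ⁅p.1, p.2⁆).prod,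
    ⟨_, by simpa using hl, rfl⟩, ?_⟩
  rw [f.map_list_prod_commutatorElement, List.map_map]
  simp [Function.comp_def, g, Function.surjInv_eq hf]

lemma exists_mem_iteratedCommutatorProds_map_eq {G Q : Type*} [Group G] [Group Q]
    (f : G →* Q) (n : ℕ) (hf : Function.Surjective f)
    (hQ : ∀ q : Q, q ∈ commutatorProds Q n) (a : G) :
    ∃ b ∈ iteratedCommutatorProds G n, f b = f a := by
  choose g hg hfg using fun q => commutatorProds_subset_image f hf n (hQ q)
  obtain ⟨l, hl, hla⟩ := hQ (f a)
  refine ⟨((l.map (Prod.map g g)).map fun p => ⁅p.1, p.2⁆).prod,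
    ⟨_, by simpa using hl, ?_, rfl⟩, ?_⟩
  · simp only [List.mem_map, forall_exists_index, and_imp]
    rintro _ p - rfl
    exact ⟨hg _, hg _⟩
  · rw [f.map_list_prod_commutatorElement, List.map_map, hla]
    simp [Function.comp_def, hfg]

theorem second_derived_subset_ker_mul_iteratedCommutatorProds_general
    {G Q : Type*} [Group G] [Group Q] (f : G →* Q) (n : ℕ)
    (hf : Function.Surjective f)
    (hQ : ∀ q : Q, q ∈ commutatorProds Q n) :
    ∀ a ∈ ⁅commutator G, commutator G⁆,
      ∃ c ∈ f.ker ⊓ ⁅commutator G, commutator G⁆,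
        ∃ b ∈ iteratedCommutatorProds G n, a = c * b := by
  intro a ha
  obtain ⟨b, hb, hfb⟩ := exists_mem_iteratedCommutatorProds_map_eq f n hf hQ a
  refine ⟨a * b⁻¹, ⟨?_, ?_⟩, b, hb, by group⟩
  · simp [hfb]
  · exact mul_mem ha <|
      Subgroup.inv_mem _ (iteratedCommutatorProds_subset_commutator_commutator G n hb)

/-- If `f : G → Q` is surjective and every element of `Q` is a product of at most `n`
commutators, then every element `a` of the second derived subgroup `⁅⁅G,G⁆,⁅G,G⁆⁆`
can be written `a = c * b` with `b ∈ Xₙ` and `c ∈ ker f ∩ ⁅⁅G,G⁆,⁅G,G⁆⁆`. -/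
theorem second_derived_subset_ker_mul_iteratedCommutatorProds
    {G Q : Type*} [Group G] [Group Q] (f : G →* Q) (n : ℕ)
    (hf : Function.Surjective f) (hn : 1 ≤ n)
    (hQ : ∀ q : Q, q ∈ commutatorProds Q n) :
    ∀ a ∈ ⁅commutator G, commutator G⁆,
      ∃ c ∈ f.ker ⊓ ⁅commutator G, commutator G⁆,
        ∃ b ∈ iteratedCommutatorProds G n, a = c * b :=
  second_derived_subset_ker_mul_iteratedCommutatorProds_general f n hf hQ
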